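/- For any f ∈ A, the principal open set D(f) is quasi-compact in the real Zariski topology: whenever D(f) ⊆ ⋃_{i∈ι} D(f_i) for a family of elements f_i ∈ A, there is a finite subset {i_1, …, i_k} ⊆ ι with D(f) ⊆ D(f_{i_1}) ∪ ⋯ ∪ D(f_{i_k}). -/

import Mathlib

/-- An ideal `J` of a commutative ring is *real* if whenever a finite sum of squares
`∑ i, a i ^ 2` lies in `J`, each `a i` lies in `J`. -/
def IsRealIdeal {A : Type*} [CommRing A] (J : Ideal A) : Prop :=
  ∀ (n : ℕ) (a : Fin n → A), (∑ i, a i ^ 2) ∈ J → ∀ i, a i ∈ J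

/-- The real Zariski spectrum: the set of real prime ideals of `A`. -/
structure RealSpectrum (A : Type*) [CommRing A] where
  asIdeal : Ideal A
  isPrime : asIdeal.IsPrime
  isReal : IsRealIdeal asIdeal

namespace RealSpectrum

variable {A : Type*} [CommRing A]

instance (p : RealSpectrum A) : p.asIdeal.IsPrime := p.isPrime

/-- `V(I)`: the set of real prime ideals containing `I`. -/
def zeroLocus (I : Ideal A) : Set (RealSpectrum A) := {p | I ≤ p.asIdeal}

/-- `D(f)`: the set of real prime ideals not containing `f`. -/
def basicOpen (f : A) : Set (RealSpectrum A) := {p | f ∉ p.asIdeal}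

end RealSpectrum

namespace RealSpectrum

variable {A : Type*} [CommRing A]

/-- The real Zariski topology, whose closed sets are exactly the sets `zeroLocus I`. -/
instance zariskiTopology : TopologicalSpace (RealSpectrum A) :=
  TopologicalSpace.ofClosed {s | ∃ I : Ideal A, s = zeroLocus I}
    ⟨⊤, by
      ext p
      simp only [Set.mem_empty_iff_false, zeroLocus, Set.mem_setOf_eq, false_iff]
      exact fun h => p.isPrime.ne_top (top_le_iff.mp h)⟩
    (fun F hF => ⟨sSup {I : Ideal A | zeroLocus I ∈ F}, by
      ext p
      simp only [Set.mem_sInter, zeroLocus, Set.mem_setOf_eq, sSup_le_iff]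
      constructor
      · intro h I hI
        exact h (zeroLocus I) hI
      · intro h s hs
        obtain ⟨I, rfl⟩ := hF hs
        exact h I hs⟩)
    (by
      rintro _ ⟨I, rfl⟩ _ ⟨J, rfl⟩
      refine ⟨I * J, ?_⟩
      ext p
      simp only [Set.mem_union, zeroLocus, Set.mem_setOf_eq, p.isPrime.mul_le])

theorem isClosed_iff (s : Set (RealSpectrum A)) :
    IsClosed s ↔ ∃ I : Ideal A, s = zeroLocus I := by
  rw [← isOpen_compl_iff]
  change sᶜᶜ ∈ _ ↔ _
  rw [compl_compl]
  rfl

theorem basicOpen_eq_compl (f : A) :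
    basicOpen f = (zeroLocus (Ideal.span {f}))ᶜ := by
  ext p
  simp [basicOpen, zeroLocus, Ideal.span_le, Set.singleton_subset_iff]

theorem isOpen_basicOpen (f : A) : IsOpen (basicOpen f) := by
  rw [basicOpen_eq_compl, isOpen_compl_iff, isClosed_iff]
  exact ⟨_, rfl⟩

end RealSpectrum

/-!
A point of `D(f)` outside `⋃ D(gᵢ)` is a real prime containing every `gᵢ` but not `f`.
Such a prime exists as soon as the ideal `I = (gᵢ)` misses the multiplicative set
`f^{2m} + ΣA²`: an ideal containing `I` and maximal among those disjoint from this set is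
prime, as for any multiplicative set, and real, because the set is stable under adding sums of
squares. Otherwise `I` contains some `f^{2m} + σ`, which involves only finitely many `gᵢ`, and
every real prime containing those `gᵢ` contains `f^m`, hence `f`.
-/

theorem IsSumSq.exists_fin_sum_sq {R : Type*} [Semiring R] {σ : R} (h : IsSumSq σ) :
    ∃ (n : ℕ) (a : Fin n → R), σ = ∑ i, a i ^ 2 := by
  induction h with
  | zero => exact ⟨0, ![], by simp⟩
  | sq_add b _ ih =>
    obtain ⟨n, a, rfl⟩ := ih
    exact ⟨n + 1, Fin.cons b a, by simp [Fin.sum_univ_succ, sq]⟩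

section EvenPowAddSumSq

variable {R : Type*} [CommSemiring R]

def evenPowAddSumSq (f : R) : Submonoid R where
  carrier := {s | ∃ (m : ℕ) (σ : R), IsSumSq σ ∧ f ^ (2 * m) + σ = s}
  one_mem' := ⟨0, 0, .zero, by simp⟩
  mul_mem' := by
    rintro _ _ ⟨m, σ, hσ, rfl⟩ ⟨n, τ, hτ, rfl⟩
    have hpow (k : ℕ) : IsSumSq (f ^ (2 * k)) := ((even_two_mul k).isSquare_pow f).isSumSq
    exact ⟨m + n, f ^ (2 * m) * τ + σ * f ^ (2 * n) + σ * τ,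
      (((hpow m).mul hτ).add (hσ.mul (hpow n))).add (hσ.mul hτ), by ring⟩

theorem sq_mem_evenPowAddSumSq (f : R) : f ^ 2 ∈ evenPowAddSumSq f :=
  ⟨1, 0, .zero, by simp⟩

theorem add_mem_evenPowAddSumSq {f s σ : R} (hs : s ∈ evenPowAddSumSq f) (hσ : IsSumSq σ) :
    s + σ ∈ evenPowAddSumSq f := by
  obtain ⟨m, τ, hτ, rfl⟩ := hs
  exact ⟨m, τ + σ, hτ.add hσ, by rw [add_assoc]⟩

end EvenPowAddSumSq

theorem Ideal.exists_le_maximal_disjoint {R : Type*} [Semiring R] (S : Submonoid R)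
    {I : Ideal R} (hI : Disjoint (I : Set R) S) :
    ∃ J : Ideal R, I ≤ J ∧ Maximal (fun J : Ideal R => Disjoint (J : Set R) S) J := by
  refine zorn_le_nonempty₀ _ (fun c hc hchain J hJ => ?_) I hI
  refine ⟨sSup c, Set.disjoint_left.mpr fun x hx => ?_, fun _ => le_sSup⟩
  obtain ⟨J', hJ'c, hxJ'⟩ := (Submodule.mem_sSup_of_directed ⟨J, hJ⟩ hchain.directedOn).1 hx
  exact Set.disjoint_left.mp (hc hJ'c) hxJ'

section RealIdeal

variable {A : Type*} [CommRing A]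

namespace IsRealIdeal

variable {J : Ideal A}

theorem mem_of_sq_add_mem (hJ : IsRealIdeal J) {a σ : A} (hσ : IsSumSq σ) (h : a ^ 2 + σ ∈ J) :
    a ∈ J := by
  obtain ⟨n, b, rfl⟩ := hσ.exists_fin_sum_sq
  have hsum : ∑ i, (Fin.cons a b : Fin (n + 1) → A) i ^ 2 ∈ J := by
    simpa [Fin.sum_univ_succ] using h
  simpa using hJ (n + 1) (Fin.cons a b) hsum 0

theorem mem_of_mem_evenPowAddSumSq [J.IsPrime] (hJ : IsRealIdeal J) {f s : A}
    (hs : s ∈ evenPowAddSumSq f) (hsJ : s ∈ J) : f ∈ J := by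
  obtain ⟨m, σ, hσ, rfl⟩ := hs
  rw [pow_mul'] at hsJ
  exact ‹J.IsPrime›.mem_of_pow_mem m (hJ.mem_of_sq_add_mem hσ hsJ)

end IsRealIdeal

/-- If `a_k ∉ J`, maximality gives `s ∈ S` with `s ≡ r a_k (mod J)`; then
`s² + r² ∑_{i ≠ k} a_i² ∈ S` is `≡ r² ∑ a_i² ≡ 0 (mod J)`. -/
theorem isRealIdeal_of_maximally_disjoint {S : Submonoid A}
    (hS : ∀ s ∈ S, ∀ σ, IsSumSq σ → s + σ ∈ S) {J : Ideal A}
    (hJ : Maximal (fun J : Ideal A => Disjoint (J : Set A) S) J) : IsRealIdeal J := by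
  intro n a hsum k
  by_contra hk
  have hlt : J < J ⊔ Ideal.span {a k} := Submodule.lt_sup_iff_notMem.mpr hk
  obtain ⟨s, hsJ', hsS⟩ := Set.not_disjoint_iff.1 (hJ.not_prop_of_gt hlt)
  obtain ⟨j, hj, _, hr, rfl⟩ := Submodule.mem_sup.1 hsJ'
  obtain ⟨r, rfl⟩ := Ideal.mem_span_singleton'.1 hr
  set σ := ∑ i ∈ Finset.univ.erase k, a i ^ 2
  have hσS : (j + r * a k) * (j + r * a k) + r ^ 2 * σ ∈ S :=
    hS _ (S.mul_mem hsS hsS) _ ((IsSquare.sq r).isSumSq.mul (IsSumSq.sum_sq _ _))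
  refine Set.disjoint_left.mp hJ.prop ?_ hσS
  have hsplit : a k ^ 2 + σ = ∑ i, a i ^ 2 := by
    rw [← Finset.add_sum_erase _ _ (Finset.mem_univ k)]
  have hexpand : (j + r * a k) * (j + r * a k) + r ^ 2 * σ
      = j * (j + 2 * r * a k) + r ^ 2 * ∑ i, a i ^ 2 := by
    rw [← hsplit]; ring
  rw [SetLike.mem_coe, hexpand]
  exact add_mem (J.mul_mem_right _ hj) (J.mul_mem_left _ hsum)

namespace RealSpectrum

theorem exists_mem_zeroLocus_basicOpen_of_disjoint {I : Ideal A} {f : A}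
    (h : Disjoint (I : Set A) (evenPowAddSumSq f)) :
    ∃ p ∈ zeroLocus I, p ∈ basicOpen f := by
  obtain ⟨J, hIJ, hJ⟩ := Ideal.exists_le_maximal_disjoint _ h
  have hprime : J.IsPrime :=
    Ideal.isPrime_of_maximally_disjoint J _ hJ.prop (fun _ => hJ.not_prop_of_gt)
  have hreal : IsRealIdeal J :=
    isRealIdeal_of_maximally_disjoint (fun _ hs _ hσ => add_mem_evenPowAddSumSq hs hσ) hJ
  refine ⟨⟨J, hprime, hreal⟩, hIJ, fun hf => ?_⟩
  exact Set.disjoint_left.mp hJ.prop (J.pow_mem_of_mem hf 2 two_pos) (sq_mem_evenPowAddSumSq f)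

theorem notMem_basicOpen_of_mem_zeroLocus {I : Ideal A} {f s : A} (hsI : s ∈ I)
    (hs : s ∈ evenPowAddSumSq f) {p : RealSpectrum A} (hp : p ∈ zeroLocus I) :
    p ∉ basicOpen f :=
  fun hpf => hpf (p.isReal.mem_of_mem_evenPowAddSumSq hs (hp hsI))

end RealSpectrum

end RealIdeal

open RealSpectrum in
/-- `D(f)` is quasi-compact: any cover of `D(f)` by principal open sets `D(fᵢ)` has a
finite subcover. -/
theorem basicOpen_quasicompact {A : Type*} [CommRing A] (f : A)
    {ι : Type*} (g : ι → A) (hcover : basicOpen f ⊆ ⋃ i, basicOpen (g i)) :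
    ∃ t : Finset ι, basicOpen f ⊆ ⋃ i ∈ t, basicOpen (g i) := by
  by_cases hdisj : Disjoint (Ideal.span (Set.range g) : Set A) (evenPowAddSumSq f)
  · obtain ⟨p, hpI, hpf⟩ := exists_mem_zeroLocus_basicOpen_of_disjoint hdisj
    obtain ⟨i, hi⟩ := Set.mem_iUnion.1 (hcover hpf)
    exact absurd (hpI (Ideal.subset_span ⟨i, rfl⟩)) hi
  · obtain ⟨s, hsI, hs⟩ := Set.not_disjoint_iff.1 hdisj
    rw [SetLike.mem_coe, Ideal.span, Submodule.span_range_eq_iSup] at hsI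
    obtain ⟨t, hst⟩ := Submodule.exists_finset_of_mem_iSup _ hsI
    refine ⟨t, fun p hpf => ?_⟩
    by_contra hp
    have hgt : ∀ i ∈ t, g i ∈ p.asIdeal := fun i hi => by
      by_contra hgi
      exact hp (Set.mem_biUnion hi hgi)
    exact notMem_basicOpen_of_mem_zeroLocus hst hs
      (iSup₂_le fun i hi => (Ideal.span_singleton_le_iff_mem _).2 (hgt i hi)) hpf
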